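/- For any two star bodies K and L in ℝ^d (d ≥ 1) and any real α > 0, the dual mixed volume Ṽ_{−α}(L,K) := (1/d)∫_{S^{d-1}} ρ_L(u)^{d+α} ρ_K(u)^{−α} dσ(u) satisfies Ṽ_{−α}(L, K) ≥ vol_d(L)^{(d+α)/d} · vol_d(K)^{−α/d}, and equality holds if and only if K and L are dilates, i.e., there exists λ > 0 with K = λ·L. -/

import Mathlib

open MeasureTheory Metric Set Filter Pointwise

noncomputable section

abbrev Euc (d : ℕ) : Type := EuclideanSpace ℝ (Fin d)

/-- Radial function of a set: `ρ_K(x) = sup {t > 0 : t • x ∈ K}`. -/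
def radialFn {d : ℕ} (K : Set (Euc d)) (x : Euc d) : ℝ :=
  sSup {t : ℝ | 0 < t ∧ t • x ∈ K}

/-- A star body: compact, `0` in the interior, star-shaped about `0`, with radial function
positive and continuous on the unit sphere. -/
def IsStarBody {d : ℕ} (K : Set (Euc d)) : Prop :=
  IsCompact K ∧ (0 : Euc d) ∈ interior K ∧
    (∀ x ∈ K, segment ℝ 0 x ⊆ K) ∧
    (∀ u ∈ sphere (0 : Euc d) 1, 0 < radialFn K u) ∧
    ContinuousOn (radialFn K) (sphere (0 : Euc d) 1)

/-- The kernel of a star body. -/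
def starKernel {d : ℕ} (K : Set (Euc d)) : Set (Euc d) :=
  {x | x ∈ K ∧ ∀ y ∈ K, segment ℝ x y ⊆ K}

/-- Radial metric between star bodies. -/
def radialDist {d : ℕ} (K L : Set (Euc d)) : ℝ :=
  ⨆ u : sphere (0 : Euc d) 1, |radialFn K (u : Euc d) - radialFn L (u : Euc d)|

/-- The adversarial objective `F(K; μ, ν) = E_μ[‖x‖_K] - E_ν[‖x‖_K]`. -/
def Fobj {d : ℕ} (K : Set (Euc d)) (μ ν : Measure (Euc d)) : ℝ :=
  (∫ x, gauge K x ∂μ) - (∫ x, gauge K x ∂ν)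

/-! With `θ = d / (d + α)`, `ρ_L ^ d` is the `θ`-weighted geometric mean of
`ρ_L ^ (d + α) ρ_K ^ (-α)` and `ρ_K ^ d`, so Hölder's inequality on the sphere bounds
`d vol(L) = ∫ ρ_L ^ d dσ` by `(d Ṽ₋α(L, K)) ^ θ (d vol(K)) ^ (1 - θ)`, which rearranges to the claim.

Hölder's inequality is obtained by integrating the weighted AM-GM inequality for the normalized
functions. The deficit is a nonnegative continuous function, so equality forces it to vanish
identically once `σ` charges every nonempty open subset of the sphere; this, and the finiteness of
`σ`, follow from the polar-coordinates formula applied to truncated cones. Vanishing of the deficit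
means that the two integrands are proportional, i.e. `ρ_K = λ ρ_L`, i.e. `K = λ • L`. -/

open Real

lemma exists_pos_iff_exists_pos_rpow_neg {q : ℝ} (hq : q ≠ 0) {P : ℝ → Prop} :
    (∃ c, 0 < c ∧ P c) ↔ ∃ lam, 0 < lam ∧ P (lam ^ (-q)) := by
  refine ⟨fun ⟨c, hc, h⟩ => ⟨c ^ (-q⁻¹), rpow_pos_of_pos hc _, ?_⟩,
    fun ⟨lam, hlam, h⟩ => ⟨_, rpow_pos_of_pos hlam _, h⟩⟩
  rwa [← rpow_mul hc.le, neg_mul_neg, inv_mul_cancel₀ hq, rpow_one]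

lemma rpow_add_mul_rpow_neg_eq_iff {a b lam p α : ℝ} (ha : 0 < a) (hb : 0 < b) (hlam : 0 < lam)
    (hpα : p + α ≠ 0) :
    b ^ (p + α) * a ^ (-α) = lam ^ (-(p + α)) * a ^ p ↔ a = lam * b := by
  have hsplit : b ^ (p + α) * a ^ (-α) = (b / a) ^ (p + α) * a ^ p := by
    rw [div_rpow hb.le ha.le, div_mul_eq_mul_div, eq_div_iff (rpow_pos_of_pos ha _).ne',
      mul_assoc, ← rpow_add ha]
    ring_nf
  rw [hsplit, mul_left_inj' (rpow_pos_of_pos ha p).ne', rpow_neg hlam.le, ← inv_rpow hlam.le,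
    rpow_left_inj (div_pos hb ha).le (inv_pos.2 hlam).le hpα, div_eq_iff ha.ne', eq_comm,
    ← inv_mul_eq_iff_eq_mul₀ hlam.ne']

lemma le_rpow_mul_rpow_iff {p α I V W : ℝ} (hp : 0 < p) (hα : 0 < α) (hI : 0 < I) (hV : 0 < V)
    (hW : 0 < W) :
    (W ≤ I ^ (p / (p + α)) * V ^ (1 - p / (p + α)) ↔ W ^ ((p + α) / p) * V ^ (-α / p) ≤ I) ∧
      (W = I ^ (p / (p + α)) * V ^ (1 - p / (p + α)) ↔ W ^ ((p + α) / p) * V ^ (-α / p) = I) := by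
  have hs : 0 < (p + α) / p := by positivity
  have hM : (I ^ (p / (p + α)) * V ^ (1 - p / (p + α))) ^ ((p + α) / p) * V ^ (-α / p) = I := by
    have e1 : p / (p + α) * ((p + α) / p) = 1 := by field_simp
    have e2 : (1 - p / (p + α)) * ((p + α) / p) + -α / p = 0 := by field_simp; ring
    rw [mul_rpow (by positivity) (by positivity), ← rpow_mul hI.le, ← rpow_mul hV.le, mul_assoc,
      ← rpow_add hV, e1, e2, rpow_one, rpow_zero, mul_one]
  have hVpos : 0 < V ^ (-α / p) := rpow_pos_of_pos hV _
  constructor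
  · rw [← rpow_le_rpow_iff hW.le (by positivity) hs, ← mul_le_mul_iff_of_pos_right hVpos, hM]
  · rw [← rpow_left_inj hW.le (by positivity) hs.ne', ← mul_left_inj' hVpos.ne', hM]

lemma mul_rpow_mul_mul_rpow_mul {c x y s t : ℝ} (hc : 0 < c) (hx : 0 ≤ x) (hy : 0 ≤ y)
    (hst : s + t = 1) : (c * x) ^ s * (c * y) ^ t = c * (x ^ s * y ^ t) := by
  rw [mul_rpow hc.le hx, mul_rpow hc.le hy, mul_mul_mul_comm, ← rpow_add hc, hst, rpow_one]

section Holder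

variable {X : Type*} [TopologicalSpace X] [CompactSpace X] [MeasurableSpace X]
  [OpensMeasurableSpace X] {μ : Measure X} [IsFiniteMeasure μ] [μ.IsOpenPosMeasure]

lemma integral_rpow_mul_rpow_le_one_of_integral_eq_one {F G : X → ℝ} (hF : Continuous F)
    (hG : Continuous G) (hF0 : ∀ x, 0 < F x) (hG0 : ∀ x, 0 < G x) (hF1 : ∫ x, F x ∂μ = 1)
    (hG1 : ∫ x, G x ∂μ = 1) {θ : ℝ} (hθ0 : 0 < θ) (hθ1 : θ < 1) :
    ∫ x, F x ^ θ * G x ^ (1 - θ) ∂μ ≤ 1 ∧ (∫ x, F x ^ θ * G x ^ (1 - θ) ∂μ = 1 ↔ F = G) := by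
  have hθ1' : 0 < 1 - θ := sub_pos.2 hθ1
  have hint : ∀ {h : X → ℝ}, Continuous h → Integrable h μ := fun hh =>
    hh.integrable_of_hasCompactSupport (.of_compactSpace _)
  have hgm : Continuous fun x => F x ^ θ * G x ^ (1 - θ) :=
    (hF.rpow_const fun _ => .inr hθ0.le).mul (hG.rpow_const fun _ => .inr hθ1'.le)
  set D : X → ℝ := fun x => θ * F x + (1 - θ) * G x - F x ^ θ * G x ^ (1 - θ)
  have hD0 : 0 ≤ D := fun x => sub_nonneg.2 <|
    geom_mean_le_arith_mean2_weighted hθ0.le hθ1'.le (hF0 x).le (hG0 x).le (by ring)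
  have hD : Continuous D := ((continuous_const.mul hF).add (continuous_const.mul hG)).sub hgm
  have hD_int : ∫ x, D x ∂μ = 1 - ∫ x, F x ^ θ * G x ^ (1 - θ) ∂μ := by
    rw [integral_sub, integral_add, integral_const_mul, integral_const_mul, hF1, hG1]
    · ring
    all_goals exact hint (by fun_prop)
  have hD_zero : D = 0 ↔ F = G := by
    simp only [funext_iff, Pi.zero_apply, D, sub_eq_zero, eq_comm (a := θ * _ + _),
      geom_mean_eq_arith_mean2_weighted_iff_of_pos hθ0 hθ1' (hF0 _).le (hG0 _).le (by ring)]
  refine ⟨by linarith [integral_nonneg hD0 (μ := μ)], ?_⟩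
  rw [← hD_zero, ← hD.ae_eq_iff_eq μ continuous_zero,
    ← integral_eq_zero_iff_of_nonneg hD0 (hint hD),
    hD_int, sub_eq_zero, eq_comm]

lemma integral_pos_of_continuous_of_pos [Nonempty X] {f : X → ℝ} (hf : Continuous f)
    (hf0 : ∀ x, 0 < f x) : 0 < ∫ x, f x ∂μ :=
  hf.integral_pos_of_hasCompactSupport_nonneg_nonzero (.of_compactSpace _) (fun x => (hf0 x).le)
    (hf0 (Classical.arbitrary X)).ne'

theorem integral_rpow_mul_rpow_le [Nonempty X] {f g : X → ℝ} (hf : Continuous f)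
    (hg : Continuous g) (hf0 : ∀ x, 0 < f x) (hg0 : ∀ x, 0 < g x) {θ : ℝ} (hθ0 : 0 < θ)
    (hθ1 : θ < 1) :
    ∫ x, f x ^ θ * g x ^ (1 - θ) ∂μ ≤ (∫ x, f x ∂μ) ^ θ * (∫ x, g x ∂μ) ^ (1 - θ) ∧
      (∫ x, f x ^ θ * g x ^ (1 - θ) ∂μ = (∫ x, f x ∂μ) ^ θ * (∫ x, g x ∂μ) ^ (1 - θ) ↔
        ∃ c, 0 < c ∧ ∀ x, f x = c * g x) := by
  set A := ∫ x, f x ∂μ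
  set B := ∫ x, g x ∂μ
  have hA : 0 < A := integral_pos_of_continuous_of_pos hf hf0
  have hB : 0 < B := integral_pos_of_continuous_of_pos hg hg0
  have hM : 0 < A ^ θ * B ^ (1 - θ) := by positivity
  have hnormalized := integral_rpow_mul_rpow_le_one_of_integral_eq_one (μ := μ)
    (hf.div_const A) (hg.div_const B) (fun x => div_pos (hf0 x) hA) (fun x => div_pos (hg0 x) hB)
    (by rw [integral_div, div_self hA.ne']) (by rw [integral_div, div_self hB.ne']) hθ0 hθ1
  have hscale : ∀ x, (f x / A) ^ θ * (g x / B) ^ (1 - θ)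
      = f x ^ θ * g x ^ (1 - θ) / (A ^ θ * B ^ (1 - θ)) := fun x => by
    rw [div_rpow (hf0 x).le hA.le, div_rpow (hg0 x).le hB.le, div_mul_div_comm]
  simp only [hscale, integral_div, div_le_one hM, div_eq_one_iff_eq hM.ne', funext_iff]
    at hnormalized
  refine ⟨hnormalized.1, hnormalized.2.trans ⟨fun h => ⟨A / B, by positivity, fun x => ?_⟩, ?_⟩⟩
  · rw [div_mul_eq_mul_div, eq_div_iff hB.ne']
    linarith [(div_eq_div_iff hA.ne' hB.ne').1 (h x)]
  · rintro ⟨c, hc, hfg⟩ x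
    have hAB : A = c * B := by simp only [A, B, hfg, integral_const_mul]
    rw [hfg, hAB, mul_div_mul_left _ _ hc.ne']

theorem rpow_integral_mul_rpow_integral_le_integral [Nonempty X] {a b : X → ℝ}
    (ha : Continuous a) (hb : Continuous b) (ha0 : ∀ x, 0 < a x) (hb0 : ∀ x, 0 < b x) {p α : ℝ}
    (hp : 0 < p) (hα : 0 < α) :
    (∫ x, b x ^ p ∂μ) ^ ((p + α) / p) * (∫ x, a x ^ p ∂μ) ^ (-α / p)
        ≤ ∫ x, b x ^ (p + α) * a x ^ (-α) ∂μ ∧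
      ((∫ x, b x ^ p ∂μ) ^ ((p + α) / p) * (∫ x, a x ^ p ∂μ) ^ (-α / p)
          = ∫ x, b x ^ (p + α) * a x ^ (-α) ∂μ ↔ ∃ lam, 0 < lam ∧ ∀ x, a x = lam * b x) := by
  have hpα : 0 < p + α := by positivity
  have ha' : ∀ q : ℝ, Continuous fun x => a x ^ q := fun _ =>
    ha.rpow_const fun x => .inl (ha0 x).ne'
  have hb' : ∀ q : ℝ, Continuous fun x => b x ^ q := fun _ =>
    hb.rpow_const fun x => .inl (hb0 x).ne'
  have hgm : ∀ x, (b x ^ (p + α) * a x ^ (-α)) ^ (p / (p + α)) * (a x ^ p) ^ (1 - p / (p + α))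
      = b x ^ p := fun x => by
    have e1 : (p + α) * (p / (p + α)) = p := by field_simp
    have e2 : -α * (p / (p + α)) + p * (1 - p / (p + α)) = 0 := by field_simp; ring
    rw [mul_rpow (rpow_pos_of_pos (hb0 x) _).le (rpow_pos_of_pos (ha0 x) _).le,
      ← rpow_mul (hb0 x).le, ← rpow_mul (ha0 x).le, ← rpow_mul (ha0 x).le, mul_assoc,
      ← rpow_add (ha0 x), e1, e2, rpow_zero, mul_one]
  have hf : Continuous fun x => b x ^ (p + α) * a x ^ (-α) := (hb' _).mul (ha' _)
  have hf0 : ∀ x, 0 < b x ^ (p + α) * a x ^ (-α) := fun x =>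
    mul_pos (rpow_pos_of_pos (hb0 x) _) (rpow_pos_of_pos (ha0 x) _)
  have hholder := integral_rpow_mul_rpow_le (μ := μ) hf (ha' p) hf0
    (fun x => rpow_pos_of_pos (ha0 x) p) (div_pos hp hpα) ((div_lt_one hpα).2 (by linarith))
  simp only [hgm] at hholder
  have hpow := le_rpow_mul_rpow_iff hp hα (integral_pos_of_continuous_of_pos (μ := μ) hf hf0)
    (integral_pos_of_continuous_of_pos (μ := μ) (ha' p) fun x => rpow_pos_of_pos (ha0 x) p)
    (integral_pos_of_continuous_of_pos (μ := μ) (hb' p) fun x => rpow_pos_of_pos (hb0 x) p)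
  refine ⟨hpow.1.1 hholder.1, hpow.2.symm.trans (hholder.2.trans ?_)⟩
  rw [exists_pos_iff_exists_pos_rpow_neg hpα.ne']
  exact exists_congr fun lam => and_congr_right fun hlam => forall_congr' fun x =>
    rpow_add_mul_rpow_neg_eq_iff (ha0 x) (hb0 x) hlam hpα.ne'

end Holder

section NormedSpace

variable {E : Type*} [NormedAddCommGroup E] [NormedSpace ℝ E]

lemma inv_norm_smul_mem_sphere {x : E} (hx : x ≠ 0) : ‖x‖⁻¹ • x ∈ sphere (0 : E) 1 :=
  mem_sphere_zero_iff_norm.2 (norm_smul_inv_norm hx)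

lemma norm_smul_of_mem_sphere {u : E} (hu : u ∈ sphere (0 : E) 1) {t : ℝ} (ht : 0 ≤ t) :
    ‖t • u‖ = t := by
  rw [norm_smul, mem_sphere_zero_iff_norm.1 hu, mul_one, Real.norm_of_nonneg ht]

end NormedSpace

variable {d : ℕ}

lemma sphere_nonempty_of_one_le (hd : 1 ≤ d) : (sphere (0 : Euc d) 1).Nonempty :=
  ⟨EuclideanSpace.single ⟨0, hd⟩ 1, by simp⟩

namespace IsStarBody

variable {K L : Set (Euc d)}

lemma bddAbove_radialSet (hK : IsStarBody K) {u : Euc d} (hu : u ∈ sphere (0 : Euc d) 1) :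
    BddAbove {t : ℝ | 0 < t ∧ t • u ∈ K} := by
  obtain ⟨R, hR⟩ := hK.1.isBounded.subset_closedBall 0
  refine ⟨R, fun t ht => ?_⟩
  simpa [norm_smul_of_mem_sphere hu ht.1.le] using hR ht.2

lemma radialFn_smul_mem (hK : IsStarBody K) {u : Euc d} (hu : u ∈ sphere (0 : Euc d) 1) :
    radialFn K u • u ∈ K := by
  obtain ⟨ε, hε, hball⟩ := Metric.mem_nhds_iff.1 (mem_interior_iff_mem_nhds.1 hK.2.1)
  have hne : {t : ℝ | 0 < t ∧ t • u ∈ K}.Nonempty :=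
    ⟨ε / 2, by positivity, hball <| by
      rw [mem_ball_zero_iff, norm_smul_of_mem_sphere hu (by positivity)]; linarith⟩
  have hclosed : IsClosed ((fun t : ℝ => t • u) ⁻¹' K) :=
    hK.1.isClosed.preimage (continuous_id.smul continuous_const)
  exact closure_minimal (fun t ht => ht.2) hclosed
    (csSup_mem_closure hne (hK.bddAbove_radialSet hu))

lemma smul_mem_iff (hK : IsStarBody K) {u : Euc d} (hu : u ∈ sphere (0 : Euc d) 1) {t : ℝ}
    (ht : 0 ≤ t) : t • u ∈ K ↔ t ≤ radialFn K u := by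
  have hρ := hK.2.2.2.1 u hu
  refine ⟨fun htu => ?_, fun hle => ?_⟩
  · rcases ht.eq_or_lt with rfl | ht
    · exact hρ.le
    · exact le_csSup (hK.bddAbove_radialSet hu) ⟨ht, htu⟩
  · refine hK.2.2.1 _ (hK.radialFn_smul_mem hu)
      ⟨1 - t / radialFn K u, t / radialFn K u, ?_, by positivity, by ring, ?_⟩
    · linarith [(div_le_one hρ).2 hle]
    · rw [smul_zero, zero_add, smul_smul, div_mul_cancel₀ _ hρ.ne']

lemma smul_mem_smul_iff (hK : IsStarBody K) {lam : ℝ} (hlam : 0 < lam) {u : Euc d}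
    (hu : u ∈ sphere (0 : Euc d) 1) {t : ℝ} (ht : 0 ≤ t) :
    t • u ∈ lam • K ↔ t ≤ lam * radialFn K u := by
  rw [mem_smul_set_iff_inv_smul_mem₀ hlam.ne', smul_smul,
    hK.smul_mem_iff hu (by positivity), inv_mul_le_iff₀ hlam]

theorem eq_smul_iff (hK : IsStarBody K) (hL : IsStarBody L) {lam : ℝ} (hlam : 0 < lam) :
    K = lam • L ↔ ∀ u ∈ sphere (0 : Euc d) 1, radialFn K u = lam * radialFn L u := by
  refine ⟨fun h u hu => ?_, fun h => ?_⟩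
  · have hiff : ∀ t, 0 ≤ t → (t ≤ radialFn K u ↔ t ≤ lam * radialFn L u) := fun t ht => by
      rw [← hK.smul_mem_iff hu ht, ← hL.smul_mem_smul_iff hlam hu ht, h]
    have hK0 := (hK.2.2.2.1 u hu).le
    have hL0 := mul_nonneg hlam.le (hL.2.2.2.1 u hu).le
    exact le_antisymm ((hiff _ hK0).1 le_rfl) ((hiff _ hL0).2 le_rfl)
  · ext x
    rcases eq_or_ne x 0 with rfl | hx
    · exact iff_of_true (interior_subset hK.2.1) ⟨0, interior_subset hL.2.1, smul_zero _⟩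
    · have hu := inv_norm_smul_mem_sphere hx
      rw [← smul_inv_smul₀ (norm_ne_zero_iff.2 hx) x, hK.smul_mem_iff hu (norm_nonneg x),
        hL.smul_mem_smul_iff hlam hu (norm_nonneg x), h _ hu]

end IsStarBody

def IsPolarMeasure (σ : Measure (sphere (0 : Euc d) 1)) : Prop :=
  ∀ g : Euc d → ℝ, Integrable g volume →
    ∫ x, g x = ∫ u : sphere (0 : Euc d) 1,
      (∫ t in Ioi (0 : ℝ), t ^ (d - 1) * g (t • (u : Euc d))) ∂σ

namespace IsPolarMeasure

variable {σ : Measure (sphere (0 : Euc d) 1)}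

theorem integral_pow_eq_mul_volume (hσ : IsPolarMeasure σ) (hd : 1 ≤ d) {E : Set (Euc d)}
    (hE : MeasurableSet E) (hE_fin : volume E ≠ ⊤) {r : Euc d → ℝ}
    (hr : ∀ u ∈ sphere (0 : Euc d) 1, 0 ≤ r u)
    (hrE : ∀ u ∈ sphere (0 : Euc d) 1, ∀ t, 0 < t → (t • u ∈ E ↔ t ≤ r u)) :
    ∫ u : sphere (0 : Euc d) 1, r u ^ d ∂σ = d * volume.real E := by
  have hray : ∀ u : sphere (0 : Euc d) 1,
      ∫ t in Ioi (0 : ℝ), t ^ (d - 1) * E.indicator 1 (t • (u : Euc d)) = r u ^ d / d := by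
    intro u
    have hcongr : EqOn (fun t : ℝ => t ^ (d - 1) * E.indicator 1 (t • (u : Euc d)))
        ((Iic (r u)).indicator fun t => t ^ (d - 1)) (Ioi 0) := fun t ht => by
      by_cases htr : t ≤ r u
      · simp [(hrE u u.2 t ht).2 htr, htr]
      · simp [mt (hrE u u.2 t ht).1 htr, htr]
    rw [setIntegral_congr_fun measurableSet_Ioi hcongr, setIntegral_indicator measurableSet_Iic,
      Ioi_inter_Iic, ← intervalIntegral.integral_of_le (hr u u.2), integral_pow,
      Nat.sub_add_cancel hd, zero_pow (by omega), sub_zero, Nat.cast_sub hd, Nat.cast_one,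
      sub_add_cancel]
  have hint : Integrable (E.indicator (1 : Euc d → ℝ)) volume :=
    (integrable_indicator_iff hE).2 (integrableOn_const hE_fin)
  have hd0 : (d : ℝ) ≠ 0 := by positivity
  rw [← integral_indicator_one hE, hσ _ hint, integral_congr_ae (ae_of_all _ hray), integral_div,
    mul_div_cancel₀ _ hd0]

theorem measureReal_preimage_pos (hσ : IsPolarMeasure σ) (hd : 1 ≤ d) {V : Set (Euc d)}
    (hV : IsOpen V) (hne : (V ∩ sphere (0 : Euc d) 1).Nonempty) :
    0 < σ.real (Subtype.val ⁻¹' V) := by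
  -- the truncated cone over `V`, whose ray sections are `(0, 1]` or empty
  set E : Set (Euc d) := {x | x ≠ 0 ∧ ‖x‖ ≤ 1 ∧ ‖x‖⁻¹ • x ∈ V}
  have hnormalize : ContinuousOn (fun x : Euc d => ‖x‖⁻¹ • x) {0}ᶜ :=
    (continuousOn_id.norm.inv₀ fun x hx => norm_ne_zero_iff.2 hx).smul continuousOn_id
  have hE : MeasurableSet E :=
    (measurableSet_singleton 0).compl.inter
      ((measurableSet_le measurable_norm measurable_const).inter
        (hV.measurableSet.preimage (by fun_prop)))
  have hE_open : IsOpen ({x : Euc d | ‖x‖ < 1} ∩ ({0}ᶜ ∩ (fun x => ‖x‖⁻¹ • x) ⁻¹' V)) :=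
    (isOpen_lt continuous_norm continuous_const).inter
      (hnormalize.isOpen_inter_preimage isOpen_compl_singleton hV)
  obtain ⟨u, huV, hu⟩ := hne
  have hE_pos : 0 < volume E := by
    refine (hE_open.measure_pos volume ⟨(1 / 2 : ℝ) • u, ?_⟩).trans_le
      (measure_mono fun x hx => ⟨hx.2.1, hx.1.le, hx.2.2⟩)
    have hu0 : u ≠ 0 := ne_zero_of_mem_unit_sphere ⟨u, hu⟩
    refine ⟨?_, by simpa using hu0, ?_⟩
    · norm_num [norm_smul_of_mem_sphere hu]
    · simp [norm_smul_of_mem_sphere hu, smul_smul, huV]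
  have hE_fin : volume E ≠ ⊤ :=
    ((measure_mono fun x hx => mem_closedBall_zero_iff.2 hx.2.1).trans_lt
      measure_closedBall_lt_top).ne
  have hvol := hσ.integral_pow_eq_mul_volume hd hE hE_fin (r := V.indicator 1)
    (fun u _ => Set.indicator_nonneg (fun _ _ => zero_le_one) u) fun u hu t ht => by
      by_cases huV : u ∈ V <;>
        simp [E, huV, ht, ht.ne', ne_zero_of_mem_unit_sphere ⟨u, hu⟩,
          norm_smul_of_mem_sphere hu ht.le, smul_smul]
  have hpow : ∀ u : sphere (0 : Euc d) 1,
      V.indicator 1 (u : Euc d) ^ d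
        = (Subtype.val ⁻¹' V).indicator (1 : sphere (0 : Euc d) 1 → ℝ) u := fun u => by
    by_cases huV : (u : Euc d) ∈ V <;> simp [huV, zero_pow (by omega : d ≠ 0)]
  rw [integral_congr_ae (ae_of_all _ hpow),
    integral_indicator_one (hV.preimage continuous_subtype_val).measurableSet] at hvol
  rw [hvol]
  exact mul_pos (by positivity) (ENNReal.toReal_pos hE_pos.ne' hE_fin)

theorem isFiniteMeasure (hσ : IsPolarMeasure σ) (hd : 1 ≤ d) : IsFiniteMeasure σ := by
  have h := hσ.measureReal_preimage_pos hd isOpen_univ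
    (by simpa using sphere_nonempty_of_one_le hd)
  rw [preimage_univ] at h
  exact ⟨lt_top_iff_ne_top.2 fun htop => by simp [Measure.real, htop] at h⟩

theorem isOpenPosMeasure (hσ : IsPolarMeasure σ) (hd : 1 ≤ d) : σ.IsOpenPosMeasure := by
  refine ⟨fun U hU ⟨u, hu⟩ hσU => ?_⟩
  obtain ⟨V, hV, rfl⟩ := isOpen_induced_iff.1 hU
  have h := hσ.measureReal_preimage_pos hd hV ⟨u, hu, u.2⟩
  simp [Measure.real, hσU] at h

theorem integral_radialFn_rpow (hσ : IsPolarMeasure σ) (hd : 1 ≤ d) {K : Set (Euc d)}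
    (hK : IsStarBody K) :
    ∫ u : sphere (0 : Euc d) 1, radialFn K u ^ (d : ℝ) ∂σ = d * (volume K).toReal := by
  simp only [rpow_natCast]
  exact hσ.integral_pow_eq_mul_volume hd hK.1.isClosed.measurableSet hK.1.measure_lt_top.ne
    (fun u hu => (hK.2.2.2.1 u hu).le) fun u hu t ht => hK.smul_mem_iff hu ht.le

end IsPolarMeasure

/-- Lutwak's dual mixed volume inequality for `Ṽ₋α`, `α > 0`:
`Ṽ₋α(L,K) ≥ vol(L)^{(d+α)/d} vol(K)^{-α/d}`, with equality iff `K` and `L` are dilates. -/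
theorem dualMixedVolume_neg_alpha_inequality {d : ℕ} (hd : 1 ≤ d)
    (σ : Measure (sphere (0 : Euc d) 1))
    (hσ : ∀ g : Euc d → ℝ, Integrable g volume →
      ∫ x, g x = ∫ u : sphere (0 : Euc d) 1,
        (∫ t in Ioi (0 : ℝ), t ^ (d - 1) * g (t • (u : Euc d))) ∂σ)
    (α : ℝ) (hα : 0 < α)
    (K L : Set (Euc d)) (hK : IsStarBody K) (hL : IsStarBody L) :
    ((1 / (d : ℝ)) * ∫ u : sphere (0 : Euc d) 1,
        radialFn L (u : Euc d) ^ ((d : ℝ) + α) * radialFn K (u : Euc d) ^ (-α) ∂σ)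
      ≥ (volume L).toReal ^ (((d : ℝ) + α) / d) * (volume K).toReal ^ (-α / d) ∧
    (((1 / (d : ℝ)) * ∫ u : sphere (0 : Euc d) 1,
        radialFn L (u : Euc d) ^ ((d : ℝ) + α) * radialFn K (u : Euc d) ^ (-α) ∂σ)
      = (volume L).toReal ^ (((d : ℝ) + α) / d) * (volume K).toReal ^ (-α / d) ↔
      ∃ lam : ℝ, 0 < lam ∧ K = lam • L) := by
  have hσ' : IsPolarMeasure σ := hσ
  have := hσ'.isFiniteMeasure hd
  have := hσ'.isOpenPosMeasure hd
  have := (sphere_nonempty_of_one_le hd).to_subtype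
  have ⟨_, _, _, hKpos, hKcont⟩ := hK
  have ⟨_, _, _, hLpos, hLcont⟩ := hL
  have hd0 : (0 : ℝ) < d := by positivity
  obtain ⟨hle, heq⟩ := rpow_integral_mul_rpow_integral_le_integral (μ := σ)
    (a := fun u => radialFn K u) (b := fun u => radialFn L u)
    (continuousOn_iff_continuous_domRestrict.1 hKcont)
    (continuousOn_iff_continuous_domRestrict.1 hLcont)
    (fun u => hKpos u u.2) (fun u => hLpos u u.2) hd0 hα
  have hexp : ((d : ℝ) + α) / d + -α / d = 1 := by field_simp; ring
  rw [hσ'.integral_radialFn_rpow hd hK, hσ'.integral_radialFn_rpow hd hL,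
    mul_rpow_mul_mul_rpow_mul hd0 ENNReal.toReal_nonneg ENNReal.toReal_nonneg hexp] at hle heq
  refine ⟨?_, ?_⟩
  · rwa [ge_iff_le, one_div_mul_eq_div, le_div_iff₀' hd0]
  · rw [one_div_mul_eq_div, eq_comm, eq_div_iff_mul_eq hd0.ne', mul_comm, heq]
    exact exists_congr fun lam => and_congr_right fun hlam => by
      rw [hK.eq_smul_iff hL hlam, Subtype.forall]
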